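/- arXiv:1709.01962 — 2 statements merged into one kernel-verified Lean document; each statement's English description precedes it below -/
import Mathlib

section
/- Let c < d be reals and F : [c,d] → [c,d] be continuous. Suppose that for every closed interval [a,b] ⊆ [c,d] with a < b there exists n > 0 such that Fⁿ([a,b]) = [c,d]. Then [c,d] is a chaotic invariant set for F: periodic points of F are dense in [c,d], F has sensitive dependence on initial conditions on [c,d] (there exists b₀ > 0 such that for every x ∈ [c,d] and ε > 0 there exist y ∈ [c,d] with |x − y| < ε and k ∈ ℕ with |F^k(x) − F^k(y)| > b₀), and some point of [c,d] has a dense forward orbit in [c,d]. -/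
/-!
Every nondegenerate subinterval `[a, b]` is eventually stretched over all of `[c, d]` by some
`F^[n]`. Since `F^[n]` then covers `[a, b]` itself, it has a fixed point there by the intermediate
value theorem; since it also hits both `c` and `d`, some point of `[a, b]` is sent at least
`(d - c) / 2` away from the image of `x`. By continuity, `[a, b]` also contains a smaller
subinterval sent by an iterate into any prescribed open set meeting `[c, d]`; nesting such
subintervals along an enumeration of a countable basis yields a point whose orbit visits every
basic open set.
-/

open Set Function Metric TopologicalSpace

def IsLocallyEventuallyOnto (F : ℝ → ℝ) (c d : ℝ) : Prop :=
  ∀ a b : ℝ, c ≤ a → a < b → b ≤ d → ∃ n : ℕ, 0 < n ∧ F^[n] '' Icc a b = Icc c d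

theorem exists_Icc_subset_ball_of_mem_Icc {a b w δ : ℝ} (hab : a < b) (hw : w ∈ Icc a b)
    (hδ : 0 < δ) :
    ∃ a' b', a ≤ a' ∧ a' < b' ∧ b' ≤ b ∧ w ∈ Icc a' b' ∧ Icc a' b' ⊆ ball w δ := by
  refine ⟨max a (w - δ / 2), min b (w + δ / 2), le_max_left _ _, ?_, min_le_left _ _,
    ⟨max_le hw.1 (by linarith), le_min hw.2 (by linarith)⟩, ?_⟩
  · simp only [lt_min_iff, max_lt_iff]
    exact ⟨⟨hab, by linarith [hw.2]⟩, by linarith [hw.1], by linarith⟩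
  · intro y ⟨hy₁, hy₂⟩
    rw [mem_ball, Real.dist_eq, abs_lt]
    constructor <;> linarith [le_max_right a (w - δ / 2), min_le_right b (w + δ / 2)]

abbrev Subinterval (c d : ℝ) : Type := {p : ℝ × ℝ // c ≤ p.1 ∧ p.1 < p.2 ∧ p.2 ≤ d}

namespace IsLocallyEventuallyOnto

variable {F : ℝ → ℝ} {c d : ℝ}

theorem exists_isPeriodicPt_mem_Icc (hF : IsLocallyEventuallyOnto F c d)
    (hcont : ContinuousOn F (Icc c d)) (hmaps : MapsTo F (Icc c d) (Icc c d))
    {a b : ℝ} (hca : c ≤ a) (hab : a < b) (hbd : b ≤ d) :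
    ∃ y ∈ Icc a b, ∃ n, 0 < n ∧ IsPeriodicPt F n y := by
  obtain ⟨n, hn, himage⟩ := hF a b hca hab hbd
  have hsurj : SurjOn F^[n] (Icc a b) (Icc a b) := by
    rw [SurjOn, himage]
    exact Icc_subset_Icc hca hbd
  obtain ⟨y, hy, hfix⟩ := exists_mem_Icc_isFixedPt_of_surjOn
    ((hcont.iterate hmaps n).mono (Icc_subset_Icc hca hbd)) hab.le hsurj
  exact ⟨y, hy, n, hn, hfix⟩

theorem exists_half_length_le_abs_iterate_sub (hF : IsLocallyEventuallyOnto F c d)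
    {a b x : ℝ} (hca : c ≤ a) (hab : a < b) (hbd : b ≤ d) (hx : x ∈ Icc a b) :
    ∃ y ∈ Icc a b, ∃ k, (d - c) / 2 ≤ |F^[k] x - F^[k] y| := by
  obtain ⟨n, -, himage⟩ := hF a b hca hab hbd
  have hxn : F^[n] x ∈ Icc c d := himage ▸ mem_image_of_mem _ hx
  have hcd : c ≤ d := hxn.1.trans hxn.2
  obtain ⟨u, hu, hcu⟩ : c ∈ F^[n] '' Icc a b := himage ▸ left_mem_Icc.2 hcd
  obtain ⟨v, hv, hdv⟩ : d ∈ F^[n] '' Icc a b := himage ▸ right_mem_Icc.2 hcd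
  rcases le_total ((c + d) / 2) (F^[n] x) with hmid | hmid
  · exact ⟨u, hu, n, le_abs.2 (Or.inl (by linarith))⟩
  · exact ⟨v, hv, n, le_abs.2 (Or.inr (by linarith))⟩

theorem exists_Icc_mapsTo_of_isOpen (hF : IsLocallyEventuallyOnto F c d)
    (hcont : ContinuousOn F (Icc c d)) (hmaps : MapsTo F (Icc c d) (Icc c d))
    {a b : ℝ} (hca : c ≤ a) (hab : a < b) (hbd : b ≤ d)
    {U : Set ℝ} (hU : IsOpen U) (hUne : (U ∩ Icc c d).Nonempty) :
    ∃ a' b', a ≤ a' ∧ a' < b' ∧ b' ≤ b ∧ ∃ n, MapsTo F^[n] (Icc a' b') U := by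
  obtain ⟨n, -, himage⟩ := hF a b hca hab hbd
  obtain ⟨_, hpU, hp⟩ := hUne
  obtain ⟨w, hw, rfl⟩ : _ ∈ F^[n] '' Icc a b := himage ▸ hp
  have hnhds : F^[n] ⁻¹' U ∈ nhdsWithin w (Icc a b) :=
    ((hcont.iterate hmaps n).mono (Icc_subset_Icc hca hbd) w hw).preimage_mem_nhdsWithin
      (hU.mem_nhds hpU)
  obtain ⟨δ, hδ, hball⟩ := mem_nhdsWithin_iff.1 hnhds
  obtain ⟨a', b', haa', hab', hb'b, -, hsub⟩ := exists_Icc_subset_ball_of_mem_Icc hab hw hδ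
  exact ⟨a', b', haa', hab', hb'b, n, fun y hy =>
    hball ⟨hsub hy, Icc_subset_Icc haa' hb'b hy⟩⟩

theorem exists_forall_exists_iterate_mem (hF : IsLocallyEventuallyOnto F c d) (hcd : c < d)
    (hcont : ContinuousOn F (Icc c d)) (hmaps : MapsTo F (Icc c d) (Icc c d))
    {U : ℕ → Set ℝ} (hU : ∀ k, IsOpen (U k)) (hUne : ∀ k, (U k ∩ Icc c d).Nonempty) :
    ∃ z ∈ Icc c d, ∀ k, ∃ n, F^[n] z ∈ U k := by
  have hstep (k : ℕ) (p : Subinterval c d) :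
      ∃ q : Subinterval c d, p.1.1 ≤ q.1.1 ∧ q.1.2 ≤ p.1.2 ∧
        ∃ n, MapsTo F^[n] (Icc q.1.1 q.1.2) (U k) := by
    obtain ⟨a', b', haa', hab', hb'b, hmapsTo⟩ :=
      hF.exists_Icc_mapsTo_of_isOpen hcont hmaps p.2.1 p.2.2.1 p.2.2.2 (hU k) (hUne k)
    exact ⟨⟨(a', b'), p.2.1.trans haa', hab', hb'b.trans p.2.2.2⟩, haa', hb'b, hmapsTo⟩
  choose next hleft hright hnext using hstep
  let I : ℕ → Subinterval c d := fun k =>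
    Nat.rec (motive := fun _ => Subinterval c d) ⟨(c, d), le_rfl, hcd, le_rfl⟩ next k
  have hanti : Antitone fun k => Icc (I k).1.1 (I k).1.2 :=
    antitone_nat_of_succ_le fun k => Icc_subset_Icc (hleft k (I k)) (hright k (I k))
  have hz := mem_iInter.1 (ciSup_mem_iInter_Icc_of_antitone_Icc hanti fun k => (I k).2.2.1.le)
  refine ⟨_, hz 0, fun k => ?_⟩
  obtain ⟨n, hn⟩ := hnext k (I k)
  exact ⟨n, hn (hz (k + 1))⟩

theorem exists_dense_orbit (hF : IsLocallyEventuallyOnto F c d) (hcd : c < d)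
    (hcont : ContinuousOn F (Icc c d)) (hmaps : MapsTo F (Icc c d) (Icc c d)) :
    ∃ z ∈ Icc c d, ∀ x ∈ Icc c d, ∀ ε > 0, ∃ n : ℕ, |F^[n] z - x| < ε := by
  let B := {V ∈ countableBasis ℝ | (V ∩ Icc c d).Nonempty}
  have hBne : B.Nonempty := by
    obtain ⟨V, hV, hcV, -⟩ :=
      (isBasis_countableBasis ℝ).exists_subset_of_mem_open (mem_univ c) isOpen_univ
    exact ⟨V, hV, c, hcV, left_mem_Icc.2 hcd.le⟩
  obtain ⟨U, hBU⟩ : ∃ U : ℕ → Set ℝ, B = range U :=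
    ((countable_countableBasis ℝ).mono (sep_subset _ _)).exists_eq_range hBne
  have hUB (k : ℕ) : U k ∈ B := hBU ▸ mem_range_self k
  obtain ⟨z, hz, hvisit⟩ := hF.exists_forall_exists_iterate_mem hcd hcont hmaps
    (fun k => isOpen_of_mem_countableBasis (hUB k).1) fun k => (hUB k).2
  refine ⟨z, hz, fun x hx ε hε => ?_⟩
  obtain ⟨V, hV, hxV, hVball⟩ :=
    (isBasis_countableBasis ℝ).exists_subset_of_mem_open (mem_ball_self hε) isOpen_ball
  obtain ⟨k, rfl⟩ : V ∈ range U := hBU ▸ ⟨hV, x, hxV, hx⟩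
  obtain ⟨n, hn⟩ := hvisit k
  exact ⟨n, Real.dist_eq _ _ ▸ hVball hn⟩

end IsLocallyEventuallyOnto

/-- If `F : [c, d] → [c, d]` is continuous and every nondegenerate closed subinterval of
`[c, d]` is mapped onto `[c, d]` by some iterate of `F`, then `[c, d]` is a chaotic
invariant set for `F`: periodic points are dense, `F` has sensitive dependence on initial
conditions on `[c, d]`, and some point has a dense forward orbit. -/
theorem chaos_from_locally_eventually_onto
    (c d : ℝ) (F : ℝ → ℝ) (hcd : c < d)
    (hcont : ContinuousOn F (Set.Icc c d))
    (hmaps : Set.MapsTo F (Set.Icc c d) (Set.Icc c d))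
    (hexp : ∀ a b : ℝ, c ≤ a → a < b → b ≤ d →
      ∃ n : ℕ, 0 < n ∧ F^[n] '' Set.Icc a b = Set.Icc c d) :
    (∀ x ∈ Set.Icc c d, ∀ ε > 0, ∃ y ∈ Set.Icc c d, |x - y| < ε ∧
      ∃ n, 1 ≤ n ∧ F^[n] y = y) ∧
    (∃ b₀ > 0, ∀ x ∈ Set.Icc c d, ∀ ε > 0, ∃ y ∈ Set.Icc c d, |x - y| < ε ∧
      ∃ k : ℕ, b₀ < |F^[k] x - F^[k] y|) ∧
    (∃ z ∈ Set.Icc c d, ∀ x ∈ Set.Icc c d, ∀ ε > 0, ∃ n : ℕ, |F^[n] z - x| < ε) := by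
  have hF : IsLocallyEventuallyOnto F c d := hexp
  refine ⟨fun x hx ε hε => ?_, ⟨(d - c) / 4, by linarith, fun x hx ε hε => ?_⟩,
    hF.exists_dense_orbit hcd hcont hmaps⟩
  all_goals
    obtain ⟨a, b, hca, hab, hbd, hxab, hball⟩ := exists_Icc_subset_ball_of_mem_Icc hcd hx hε
    have hclose (y : ℝ) (hy : y ∈ Icc a b) : |x - y| < ε := by
      simpa [Real.dist_eq, abs_sub_comm] using hball hy
  · obtain ⟨y, hy, n, hn, hper⟩ := hF.exists_isPeriodicPt_mem_Icc hcont hmaps hca hab hbd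
    exact ⟨y, Icc_subset_Icc hca hbd hy, hclose y hy, n, hn, hper⟩
  · obtain ⟨y, hy, k, hk⟩ := hF.exists_half_length_le_abs_iterate_sub hca hab hbd hxab
    exact ⟨y, Icc_subset_Icc hca hbd hy, hclose y hy, k, by linarith⟩
end

section
/- Under the saw map setup, every trajectory enters the union of the invariant segments after finitely many iterations: for every x ∈ J = [0, r_0] there exists n ∈ ℕ such that Tⁿ(x) ∈ J* ∪ J_1 ∪ J_2 ∪ ... ∪ J_{k*}. -/
/-- `T` is affine (linear) on the segment `[a, b]`. -/
def AffOn (T : ℝ → ℝ) (a b : ℝ) : Prop :=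
  ∃ m c : ℝ, ∀ x ∈ Set.Icc a b, T x = m * x + c

/-- The "saw map" setup: sequences `q, r, p`, the map `T`, fixed points `e k ∈ (q (k+1), r k)`
and `ehat k ∈ (r k, q k)`, and the index `kstar`, subject to all standing assumptions. -/
structure SawMapSetup where
  q : ℕ → ℝ
  r : ℕ → ℝ
  p : ℕ → ℝ
  T : ℝ → ℝ
  e : ℕ → ℝ
  ehat : ℕ → ℝ
  kstar : ℕ
  hq_pos : ∀ k, 1 ≤ k → 0 < q k
  hr_pos : ∀ k, 0 < r k
  hq1r0 : q 1 < r 0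
  hrq : ∀ k, 1 ≤ k → r k < q k
  hqr : ∀ k, 1 ≤ k → q (k + 1) < r k
  hq_lim : Filter.Tendsto q Filter.atTop (nhds 0)
  hr_lim : Filter.Tendsto r Filter.atTop (nhds 0)
  hp_pos : ∀ k, 0 < p k
  hp_dec : ∀ k, p (k + 1) < p k
  hp0r0 : p 0 < r 0
  hpr : ∀ k, 1 ≤ k → r k < p k
  hT0 : T 0 = 0
  hTq : ∀ k, 1 ≤ k → T (q k) = 0
  hTr : ∀ k, T (r k) = p k
  haff0 : AffOn T (q 1) (r 0)
  haff1 : ∀ k, 1 ≤ k → AffOn T (q (k + 1)) (r k)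
  haff2 : ∀ k, 1 ≤ k → AffOn T (r k) (q k)
  hTJ : Set.MapsTo T (Set.Icc 0 (r 0)) (Set.Icc 0 (r 0))
  halpha1 : ∀ k, 1 ≤ k → 1 < p k / (r k - q (k + 1))
  he_mem : ∀ k, 1 ≤ k → e k ∈ Set.Ioo (q (k + 1)) (r k)
  he_fix : ∀ k, 1 ≤ k → T (e k) = e k
  he_uniq : ∀ k, 1 ≤ k → ∀ x ∈ Set.Ioo (q (k + 1)) (r k), T x = x → x = e k
  hehat_mem : ∀ k, 1 ≤ k → ehat k ∈ Set.Ioo (r k) (q k)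
  hehat_fix : ∀ k, 1 ≤ k → T (ehat k) = ehat k
  hehat_uniq : ∀ k, 1 ≤ k → ∀ x ∈ Set.Ioo (r k) (q k), T x = x → x = ehat k
  halpha_mono : ∀ k, p k / (r k - q (k + 1)) < p (k + 1) / (r (k + 1) - q (k + 2))
  hbeta_mono : ∀ k, 1 ≤ k → p k / (q k - r k) < p (k + 1) / (q (k + 1) - r (k + 1))
  hkstar : 1 ≤ kstar
  hp_e_big : ∀ k, kstar + 1 ≤ k → e (k - 1) < p k
  hp_e_small : 2 ≤ kstar → ∀ k, 2 ≤ k → k ≤ kstar → p k < e (k - 1)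
  htech : ∀ k, 1 ≤ k → k < kstar → p k < q k + e k / (p (k - 1) / (r (k - 1) - q k))

namespace SawMapSetup

variable (S : SawMapSetup)

/-- Absolute value of the slope of `T` on `[q (k+1), r k]`. -/
noncomputable def alpha (k : ℕ) : ℝ := S.p k / (S.r k - S.q (k + 1))

/-- Absolute value of the slope of `T` on `[r k, q k]`. -/
noncomputable def beta (k : ℕ) : ℝ := S.p k / (S.q k - S.r k)

/-- The invariant segment `J* = [0, p kstar]`. -/
def Jstar : Set ℝ := Set.Icc 0 (S.p S.kstar)

/-- The segment `J_k = [e k, p k]`. -/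
def Jk (k : ℕ) : Set ℝ := Set.Icc (S.e k) (S.p k)

/-- The segment `G_k = [T (p k), p k]`. -/
def Gk (k : ℕ) : Set ℝ := Set.Icc (S.T (S.p k)) (S.p k)

/-- The set `Ω` of points of `J*` that are eventually mapped to `0`. -/
def Omega : Set ℝ := {x | x ∈ S.Jstar ∧ ∃ n, 1 ≤ n ∧ S.T^[n] x = 0}

/-- The set `Σ`, the closure of `Ω`. -/
def Sig : Set ℝ := closure S.Omega

end SawMapSetup

/-!
Let `U = J* ∪ J_1 ∪ ⋯ ∪ J_{kstar}`. Off `U` we have `T y < y`: the outer branch `[q 1, r 0]` and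
each increasing branch below its fixed point `e k` lie under the diagonal, while on a decreasing
branch `[r k, q k]` the map is bounded by `p k` and the points of that branch outside `U` exceed
`p k`. Hence an orbit avoiding `U` decreases strictly to a limit `L ∈ [p kstar, r 0)`. Since `T`
is affine just to the right of `L` and the orbit approaches `L` from above, `T L = L`, which is
impossible on the outer branch and on an increasing branch below `e k`. If instead `e k ≤ L` on an
increasing branch, the orbit eventually lies in `J_k`; and on a decreasing branch some iterate lies
between `L ≥ r k > e k` and `p k`, hence in `J_k`.
-/

open Filter Topology Function

theorem isFixedPt_of_tendsto_iterate_nhdsWithin {α : Type*} [TopologicalSpace α] [T2Space α]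
    {f : α → α} {s : Set α} {x y : α} (hy : Tendsto (fun n => f^[n] x) atTop (𝓝[s] y))
    (hf : ContinuousWithinAt f s y) : IsFixedPt f y := by
  refine tendsto_nhds_unique ((tendsto_add_atTop_iff_nat 1).1 ?_) (hy.mono_right nhdsWithin_le_nhds)
  simp only [iterate_succ' f]
  exact hf.tendsto.comp hy

namespace AffOn

variable {T : ℝ → ℝ} {a b x : ℝ}

lemma mono (hT : AffOn T a b) {a' b' : ℝ} (ha : a ≤ a') (hb : b' ≤ b) : AffOn T a' b' :=
  let ⟨m, c, hmc⟩ := hT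
  ⟨m, c, fun y hy => hmc y ⟨ha.trans hy.1, hy.2.trans hb⟩⟩

lemma lt_self (hT : AffOn T a b) (ha : T a < a) (hb : T b ≤ b) (hx : x ∈ Set.Ico a b) :
    T x < x := by
  obtain ⟨m, c, hmc⟩ := hT
  have hab : a ≤ b := hx.1.trans hx.2.le
  rw [hmc a ⟨le_rfl, hab⟩] at ha
  rw [hmc b ⟨hab, le_rfl⟩] at hb
  rw [hmc x ⟨hx.1, hx.2.le⟩]
  rcases le_or_gt m 1 with hm | hm
  · nlinarith [mul_nonneg (sub_nonneg.2 hm) (sub_nonneg.2 hx.1)]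
  · nlinarith [mul_pos (sub_pos.2 hm) (sub_pos.2 hx.2)]

lemma le_of_le_of_le (hT : AffOn T a b) {P : ℝ} (ha : T a ≤ P) (hb : T b ≤ P)
    (hx : x ∈ Set.Icc a b) : T x ≤ P := by
  obtain ⟨m, c, hmc⟩ := hT
  have hab : a ≤ b := hx.1.trans hx.2
  rw [hmc a ⟨le_rfl, hab⟩] at ha
  rw [hmc b ⟨hab, le_rfl⟩] at hb
  rw [hmc x hx]
  rcases le_or_gt 0 m with hm | hm
  · nlinarith [mul_nonneg hm (sub_nonneg.2 hx.2)]
  · nlinarith [mul_nonneg (neg_nonneg.2 hm.le) (sub_nonneg.2 hx.1)]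

lemma continuousWithinAt_Ici (hT : AffOn T a b) (hx : x ∈ Set.Ico a b) :
    ContinuousWithinAt T (Set.Ici x) x := by
  obtain ⟨m, c, hmc⟩ := hT
  have hcont : ContinuousWithinAt (fun y => m * y + c) (Set.Ici x) x := by fun_prop
  refine hcont.congr_of_eventuallyEq ?_ (hmc x ⟨hx.1, hx.2.le⟩)
  filter_upwards [Ico_mem_nhdsGE hx.2] with y hy using hmc y ⟨hx.1.trans hy.1, hy.2.le⟩

end AffOn

namespace SawMapSetup

def invariantUnion (S : SawMapSetup) : Set ℝ := S.Jstar ∪ ⋃ k ∈ Set.Icc 1 S.kstar, S.Jk k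

variable {S : SawMapSetup} {k : ℕ} {x y : ℝ}

lemma mem_invariantUnion_of_mem_Jk (hk : k ∈ Set.Icc 1 S.kstar) (hy : y ∈ S.Jk k) :
    y ∈ S.invariantUnion :=
  Or.inr (Set.mem_biUnion hk hy)

lemma p_kstar_lt_of_not_mem (hy : 0 ≤ y) (hyU : y ∉ S.invariantUnion) : S.p S.kstar < y := by
  by_contra! h
  exact hyU (Or.inl ⟨hy, h⟩)

lemma lt_e_of_not_mem (hk : k ∈ Set.Icc 1 S.kstar) (hy : y ≤ S.r k)
    (hyU : y ∉ S.invariantUnion) : y < S.e k := by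
  by_contra! h
  exact hyU (mem_invariantUnion_of_mem_Jk hk ⟨h, hy.trans (S.hpr k hk.1).le⟩)

lemma p_lt_of_not_mem (hk : k ∈ Set.Icc 1 S.kstar) (hy : S.r k ≤ y)
    (hyU : y ∉ S.invariantUnion) : S.p k < y := by
  by_contra! h
  exact hyU (mem_invariantUnion_of_mem_Jk hk ⟨(S.he_mem k hk.1).2.le.trans hy, h⟩)

lemma q_kstar_succ_lt_p_kstar (S : SawMapSetup) : S.q (S.kstar + 1) < S.p S.kstar :=
  (S.hqr _ S.hkstar).trans (S.hpr _ S.hkstar)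

lemma exists_branch (S : SawMapSetup) (K : ℕ) {y : ℝ} (hy : y ∈ Set.Ico (S.q (K + 1)) (S.r 0)) :
    y ∈ Set.Ico (S.q 1) (S.r 0) ∨ ∃ k ∈ Set.Icc 1 K,
      y ∈ Set.Ico (S.q (k + 1)) (S.r k) ∨ y ∈ Set.Ico (S.r k) (S.q k) := by
  induction K with
  | zero => exact Or.inl hy
  | succ K ih =>
    rcases lt_or_ge y (S.r (K + 1)) with hr | hr
    · exact Or.inr ⟨K + 1, ⟨by omega, le_rfl⟩, Or.inl ⟨hy.1, hr⟩⟩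
    rcases lt_or_ge y (S.q (K + 1)) with hq | hq
    · exact Or.inr ⟨K + 1, ⟨by omega, le_rfl⟩, Or.inr ⟨hr, hq⟩⟩
    rcases ih ⟨hq, hy.2⟩ with h | ⟨k, hk, h⟩
    · exact Or.inl h
    · exact Or.inr ⟨k, ⟨hk.1, hk.2.trans K.le_succ⟩, h⟩

lemma T_lt_self_of_mem_Ico_q_one (hy : y ∈ Set.Ico (S.q 1) (S.r 0)) : S.T y < y :=
  S.haff0.lt_self (by rw [S.hTq 1 le_rfl]; exact S.hq_pos 1 le_rfl)
    (by rw [S.hTr 0]; exact S.hp0r0.le) hy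

lemma T_lt_self_of_mem_Ico_q_e (hk : 1 ≤ k) (hy : y ∈ Set.Ico (S.q (k + 1)) (S.e k)) :
    S.T y < y :=
  ((S.haff1 k hk).mono le_rfl (S.he_mem k hk).2.le).lt_self
    (by rw [S.hTq (k + 1) (by omega)]; exact S.hq_pos (k + 1) (by omega))
    (S.he_fix k hk).le hy

lemma T_le_p_of_mem_Icc_r_q (hk : 1 ≤ k) (hy : y ∈ Set.Icc (S.r k) (S.q k)) : S.T y ≤ S.p k :=
  (S.haff2 k hk).le_of_le_of_le (S.hTr k).le (by rw [S.hTq k hk]; exact (S.hp_pos k).le) hy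

lemma T_lt_self_of_not_mem (hy : y ∈ Set.Icc 0 (S.r 0)) (hyU : y ∉ S.invariantUnion) :
    S.T y < y := by
  have hpy := p_kstar_lt_of_not_mem hy.1 hyU
  rcases hy.2.eq_or_lt with rfl | hyr
  · rw [S.hTr 0]
    exact S.hp0r0
  rcases S.exists_branch S.kstar ⟨(S.q_kstar_succ_lt_p_kstar.trans hpy).le, hyr⟩ with
    hy' | ⟨k, hk, hy' | hy'⟩
  · exact T_lt_self_of_mem_Ico_q_one hy'
  · exact T_lt_self_of_mem_Ico_q_e hk.1 ⟨hy'.1, lt_e_of_not_mem hk hy'.2.le hyU⟩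
  · exact (T_le_p_of_mem_Icc_r_q hk.1 ⟨hy'.1, hy'.2.le⟩).trans_lt (p_lt_of_not_mem hk hy'.1 hyU)

lemma strictAnti_iterate (hx : x ∈ Set.Icc 0 (S.r 0))
    (hU : ∀ n, S.T^[n] x ∉ S.invariantUnion) : StrictAnti fun n => S.T^[n] x :=
  strictAnti_nat_of_succ_lt fun n => by
    rw [iterate_succ_apply']
    exact T_lt_self_of_not_mem (S.hTJ.iterate n hx) (hU n)

lemma exists_tendsto_iterate (hx : x ∈ Set.Icc 0 (S.r 0))
    (hU : ∀ n, S.T^[n] x ∉ S.invariantUnion) :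
    ∃ L ∈ Set.Ico (S.p S.kstar) (S.r 0),
      Tendsto (fun n => S.T^[n] x) atTop (𝓝 L) ∧ ∀ n, L ≤ S.T^[n] x := by
  have hanti := strictAnti_iterate hx hU
  have hbdd : BddBelow (Set.range fun n => S.T^[n] x) :=
    ⟨0, by rintro _ ⟨n, rfl⟩; exact (S.hTJ.iterate n hx).1⟩
  have hle : ∀ n, ⨅ m, S.T^[m] x ≤ S.T^[n] x := ciInf_le hbdd
  refine ⟨⨅ n, S.T^[n] x,
    ⟨le_ciInf fun n => (p_kstar_lt_of_not_mem (S.hTJ.iterate n hx).1 (hU n)).le, ?_⟩,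
    tendsto_atTop_ciInf hanti.antitone hbdd, hle⟩
  calc ⨅ n, S.T^[n] x ≤ S.T^[1] x := hle 1
    _ < S.T^[0] x := hanti zero_lt_one
    _ ≤ S.r 0 := hx.2

end SawMapSetup

open SawMapSetup

/-- Under the saw map setup, every trajectory enters the union
`J* ∪ J_1 ∪ ⋯ ∪ J_{kstar}` of the invariant segments after finitely many iterations. -/
theorem eventually_in_union (S : SawMapSetup) :
    ∀ x ∈ Set.Icc 0 (S.r 0),
      ∃ n : ℕ, S.T^[n] x ∈ S.Jstar ∪ ⋃ k ∈ Set.Icc 1 S.kstar, S.Jk k := by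
  intro x hx
  by_contra! hU
  obtain ⟨L, hL, hlim, hle⟩ := exists_tendsto_iterate hx hU
  have hfix {a b : ℝ} (hT : AffOn S.T a b) (hLab : L ∈ Set.Ico a b) : S.T L = L :=
    isFixedPt_of_tendsto_iterate_nhdsWithin (tendsto_nhdsWithin_iff.2 ⟨hlim, .of_forall hle⟩)
      (hT.continuousWithinAt_Ici hLab)
  rcases S.exists_branch S.kstar ⟨(S.q_kstar_succ_lt_p_kstar.trans_le hL.1).le, hL.2⟩ with
    hL' | ⟨k, hk, hL' | hL'⟩
  · exact (T_lt_self_of_mem_Ico_q_one hL').ne (hfix S.haff0 hL')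
  · rcases lt_or_ge L (S.e k) with hLe | hLe
    · exact (T_lt_self_of_mem_Ico_q_e hk.1 ⟨hL'.1, hLe⟩).ne (hfix (S.haff1 k hk.1) hL')
    obtain ⟨n, hn⟩ := (hlim.eventually_lt_const hL'.2).exists
    exact (hLe.trans (hle n)).not_gt (lt_e_of_not_mem hk hn.le (hU n))
  · obtain ⟨n, hn⟩ := (hlim.eventually_lt_const hL'.2).exists
    have hTp := T_le_p_of_mem_Icc_r_q hk.1 ⟨hL'.1.trans (hle n), hn.le⟩
    rw [← iterate_succ_apply' S.T n x] at hTp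
    exact hTp.not_gt (p_lt_of_not_mem hk (hL'.1.trans (hle (n + 1))) (hU (n + 1)))
end
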